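/- arXiv:1503.02792 — 2 statements merged into one kernel-verified Lean document; each statement's English description precedes it below -/
import Mathlib

section
/- Let X be a finite set and b, p, p' partitions of X. Then: (1) p' ⊣_b p if and only if p' ∈ Gl_b(p), the set of admissible gluings of p; (2) p' ⊐_b p if and only if p' ∈ Sp_b(p), the set of admissible splits of p. -/
open Sum
open scoped Classical

noncomputable section

namespace PartitionPaper

variable {X : Type*}

/-- The number of blocks of a partition of `X`, encoded as a setoid on `X`. -/
def nc (p : Setoid X) : ℕ := Nat.card (Quotient p)

/-- The geodesic distance `d(p,p') = (nc p + nc p')/2 - nc (p ⊔ p')`. -/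
def pdist (p q : Setoid X) : ℚ :=
  ((nc p : ℚ) + (nc q : ℚ)) / 2 - (nc (p ⊔ q) : ℚ)

/-- Geodesic order with base partition `b` : `p' ≤_b p`. -/
def geoLE (b p' p : Setoid X) : Prop := pdist b p' + pdist p' p = pdist b p

/-- Coarser-compatible order `p' ⊣_b p` : `p'` coarser than `p` and
`nc (p' ⊔ b) = nc (p ⊔ b)`.  (In the setoid lattice, `p ≤ p'` means `p` is finer.) -/
def coarserComp (b p' p : Setoid X) : Prop :=
  p ≤ p' ∧ nc (p' ⊔ b) = nc (p ⊔ b)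

/-- Finer-compatible order `p' ⊐_b p` : `p'` finer than `p` and
`nc p' - nc (p' ⊔ b) = nc p - nc (p ⊔ b)`. -/
def finerComp (b p' p : Setoid X) : Prop :=
  p' ≤ p ∧ (nc p' : ℤ) - (nc (p' ⊔ b) : ℤ) = (nc p : ℤ) - (nc (p ⊔ b) : ℤ)

/-- `p'` is obtained from `p` by gluing two blocks of `p` into one. -/
def IsGluing (p p' : Setoid X) : Prop := p ≤ p' ∧ nc p' + 1 = nc p

/-- The Cayley graph on partitions of `X`: an edge iff one partition is obtained
from the other by gluing two of its blocks into one. -/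
def glueGraph (X : Type*) : SimpleGraph (Setoid X) where
  Adj p q := IsGluing p q ∨ IsGluing q p
  symm := ⟨fun _ _ h => h.elim Or.inr Or.inl⟩
  loopless := by
    refine ⟨?_⟩
    intro p h
    rcases h with ⟨-, h⟩ | ⟨-, h⟩ <;> omega

/-- The segment `[p₁, p₂]` for the geodesic distance. -/
def seg (p₁ p₂ : Setoid X) : Set (Setoid X) :=
  {p | pdist p₁ p + pdist p p₂ = pdist p₁ p₂}

/-- The defect of `p'` from being on `[b, p]`. -/
def df (b p' p : Setoid X) : ℚ := pdist b p' + pdist p' p - pdist b p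

/-- Admissible one-step splits: `p'` is obtained by cutting a (pivotal) block of `p`
into two blocks in such a way that the join with `b` gains one block. -/
def Delta (b p : Setoid X) : Set (Setoid X) :=
  {p' | p' ≤ p ∧ nc p' = nc p + 1 ∧ nc (p' ⊔ b) = nc (p ⊔ b) + 1}

/-- The admissible splits `Sp_b(p) = ⋃ₘ Δ_b^m(p)`. -/
def Sp (b p : Setoid X) : Set (Setoid X) :=
  {p' | Relation.ReflTransGen (fun u v => v ∈ Delta b u) p p'}

/-- The admissible gluings `Gl_b(p)`: partitions obtained by gluing blocks of `p`
without altering the number of blocks of the join with `b`. -/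
def Gl (b p : Setoid X) : Set (Setoid X) :=
  {p' | p ≤ p' ∧ nc (p' ⊔ b) = nc (p ⊔ b)}

/-- `p'` is directly smaller than `p` for the relation `r`. -/
def DirectlySmaller (r : Setoid X → Setoid X → Prop) (p' p : Setoid X) : Prop :=
  r p' p ∧ p' ≠ p ∧ ¬ ∃ p'', p'' ≠ p ∧ p'' ≠ p' ∧ r p' p'' ∧ r p'' p

/-- The block of the partition `p` corresponding to a class `c`. -/
def blockSet (p : Setoid X) (c : Quotient p) : Set X := {x | Quotient.mk p x = c}

/-- The number of blocks of `q` contained in the block `c` of `p`. -/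
def numSubBlocks (q p : Setoid X) (c : Quotient p) : ℕ :=
  Nat.card {d : Quotient q // blockSet q d ⊆ blockSet p c}

/-- The number of blocks of `p` containing exactly `i` blocks of `q`. -/
def rcount (q p : Setoid X) (i : ℕ) : ℕ :=
  Nat.card {c : Quotient p // numSubBlocks q p c = i}

/-- The Möbius function of the refinement order:
`μ_f(q,p) = (-1)^(nc q - nc p) ∏_i ((i-1)!)^(r_i)` for `q` finer than `p`. -/
def muf (q p : Setoid X) : ℤ :=
  (-1) ^ (nc q - nc p) *
    ∏ i ∈ Finset.range (nc q + 1), ((Nat.factorial (i - 1) : ℤ)) ^ (rcount q p i)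

/-- `P_k`: partitions of `{1,…,k} ∪ {1',…,k'}`, the left summand being the
unprimed (top) row and the right summand the primed (bottom) row. -/
abbrev Pk (k : ℕ) := Setoid (Fin k ⊕ Fin k)

/-- The identity partition `id_k = {{i, i'} : 1 ≤ i ≤ k}`. -/
def idk (k : ℕ) : Pk k := Setoid.ker (Sum.elim id id)

/-- The permutation partition associated with `σ`, with blocks `{i, σ(i)'}`. -/
def permPartition {k : ℕ} (σ : Equiv.Perm (Fin k)) : Pk k :=
  Setoid.ker (Sum.elim id σ.symm)

/-- `S_k`, the set of permutation partitions. -/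
def Sk (k : ℕ) : Set (Pk k) := Set.range (permPartition (k := k))

/-- `B_k`, the set of Brauer partitions: all blocks have exactly two elements. -/
def Bk (k : ℕ) : Set (Pk k) := {p | ∀ x, Nat.card {y | p.r x y} = 2}

/-- Embedding of the top/bottom rows of the upper diagram `q` into the
three-row diagram (top ⊕ (middle ⊕ bottom)). -/
def upMap (k : ℕ) : Fin k ⊕ Fin k → Fin k ⊕ (Fin k ⊕ Fin k) :=
  Sum.elim Sum.inl (fun i => Sum.inr (Sum.inl i))

/-- Embedding of the top/bottom rows of the lower diagram `p` into the
three-row diagram. -/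
def downMap (k : ℕ) : Fin k ⊕ Fin k → Fin k ⊕ (Fin k ⊕ Fin k) :=
  Sum.elim (fun i => Sum.inr (Sum.inl i)) (fun i => Sum.inr (Sum.inr i))

/-- The partition of the three-row diagram obtained by stacking a diagram of `q`
on top of a diagram of `p` (identifying the bottom row of `q` with the top row
of `p`): the equivalence relation generated by the copies of `q` and `p`. -/
def stackSetoid {k : ℕ} (p q : Pk k) : Setoid (Fin k ⊕ (Fin k ⊕ Fin k)) :=
  sInf {s | ∀ x y,
    ((∃ a b, upMap k a = x ∧ upMap k b = y ∧ q.r a b) ∨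
     (∃ a b, downMap k a = x ∧ downMap k b = y ∧ p.r a b)) → s.r x y}

/-- The composition `p ∘ q` (a diagram of `q` stacked above a diagram of `p`),
obtained by restricting the stacked partition to the outer rows. -/
def comp {k : ℕ} (p q : Pk k) : Pk k :=
  Setoid.comap (Sum.elim Sum.inl (fun i => Sum.inr (Sum.inr i))) (stackSetoid p q)

/-- `κ(p,q)`: the number of connected components of the stacked diagram entirely
contained in the middle row. -/
def kappaP {k : ℕ} (p q : Pk k) : ℕ :=
  Nat.card {c : Quotient (stackSetoid p q) //
    ∀ x, Quotient.mk (stackSetoid p q) x = c → ∃ i : Fin k, x = Sum.inr (Sum.inl i)}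

/-- The transpose `ᵗp`, exchanging the two rows. -/
def transpose {k : ℕ} (p : Pk k) : Pk k := Setoid.comap Sum.swap p

/-- The disjoint-union partition on a sum type. -/
def sumSetoid {α β : Type*} (p : Setoid α) (q : Setoid β) : Setoid (α ⊕ β) :=
  Setoid.ker (Sum.map (Quotient.mk p) (Quotient.mk q))

/-- Reindexing of the rows for the tensor product. -/
def reindex (k l : ℕ) :
    Fin (k + l) ⊕ Fin (k + l) → (Fin k ⊕ Fin k) ⊕ (Fin l ⊕ Fin l) :=
  Sum.elim
    (fun j => Sum.elim (fun a => Sum.inl (Sum.inl a)) (fun b => Sum.inr (Sum.inl b))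
      (finSumFinEquiv.symm j))
    (fun j => Sum.elim (fun a => Sum.inl (Sum.inr a)) (fun b => Sum.inr (Sum.inr b))
      (finSumFinEquiv.symm j))

/-- The tensor product `p ⊗ q ∈ P_{k+l}`: a diagram of `p` placed to the left of
a diagram of `q`. -/
def tensor {k l : ℕ} (p : Pk k) (q : Pk l) : Pk (k + l) :=
  Setoid.comap (reindex k l) (sumSetoid p q)

/-- The `≺`-defect `η(p,q)`. -/
def eta {k : ℕ} (p q : Pk k) : ℚ :=
  pdist (idk k) p + pdist (idk k) q - pdist (idk k) (comp p q)
    - ((k : ℚ) + (nc (comp p q) : ℚ) - (nc p : ℚ) - (nc q : ℚ)) / 2 - (kappaP p q : ℚ)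

/-- The Kreweras complement of `p'` in `p`: the set of `p''` with `p = p' ∘ p''`
realizing equality in the `≺`-defect inequality. -/
def Krew {k : ℕ} (p p' : Pk k) : Set (Pk k) :=
  {p'' | comp p' p'' = p ∧ eta p' p'' = 0}

/-- `p' ≺ p` : `p'` is an admissible prefix of `p`. -/
def prec {k : ℕ} (p' p : Pk k) : Prop :=
  ∃ p'', comp p' p'' = p ∧ eta p' p'' = 0

/-- The partition of `{1,…,k}` into the orbits (cycles) of the permutation `σ`. -/
def cycleSetoid {k : ℕ} (σ : Equiv.Perm (Fin k)) : Setoid (Fin k) :=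
  ⟨σ.SameCycle,
    ⟨fun x => Equiv.Perm.SameCycle.refl σ x, fun h => h.symm, fun h₁ h₂ => h₁.trans h₂⟩⟩

/-- A partition of `{1,…,k}` is non-crossing if there are no `a < b < c < d` with
`a, c` in one block and `b, d` in a different block. -/
def NonCrossing {k : ℕ} (π : Setoid (Fin k)) : Prop :=
  ¬ ∃ a b c d : Fin k, a < b ∧ b < c ∧ c < d ∧ π.r a c ∧ π.r b d ∧ ¬ π.r a b

/-- The map sending a permutation partition to the partition of `{1,…,k}` into
the orbits of the corresponding bijection (the blocks of `p ⊔ id_k` restricted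
to the top row). -/
def orbitMap {k : ℕ} (p : Pk k) : Setoid (Fin k) :=
  Setoid.comap (Sum.inl : Fin k → Fin k ⊕ Fin k) (p ⊔ idk k)

/-- The permutation `(1,k+1)(2,k+2)⋯(k,2k)` of `{1,…,2k}`. -/
def tauPerm (k : ℕ) : Equiv.Perm (Fin (k + k)) :=
  (finSumFinEquiv.symm.trans (Equiv.sumComm (Fin k) (Fin k))).trans finSumFinEquiv

/-- The left part of a partition in `P_{k₁+k₂}`. -/
def leftPart {k₁ k₂ : ℕ} (p : Pk (k₁ + k₂)) : Pk k₁ :=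
  Setoid.comap (Sum.map (Fin.castAdd k₂) (Fin.castAdd k₂)) p

/-- The right part of a partition in `P_{k₁+k₂}`. -/
def rightPart {k₁ k₂ : ℕ} (p : Pk (k₁ + k₂)) : Pk k₂ :=
  Setoid.comap (Sum.map (Fin.natAdd k₁) (Fin.natAdd k₁)) p

/-- The `p`-moment `m_p(E_N) = Tr_N(E_N ᵗp)/N^{nc(p ⊔ id_k)}
`= ∑_{p'} (E_N)_{p'} N^{nc(p ⊔ p') - nc(p ⊔ id_k)}`. -/
def momentF {k : ℕ} (E : ℕ → Pk k → ℂ) (p : Pk k) (N : ℕ) : ℂ :=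
  ∑ᶠ p' : Pk k, E N p' * (N : ℂ) ^ ((nc (p ⊔ p') : ℤ) - (nc (p ⊔ idk k) : ℤ))

/-- The `p`-cumulant `κ_p(E_N) = N^{nc p - nc (p ⊔ id_k)} (E_N)_p`. -/
def cumulantF {k : ℕ} (E : ℕ → Pk k → ℂ) (p : Pk k) (N : ℕ) : ℂ :=
  (N : ℂ) ^ ((nc p : ℤ) - (nc (p ⊔ idk k) : ℤ)) * E N p

section Statement3Aux

variable {X : Type*}

private def qmap {q r : Setoid X} (h : q ≤ r) : Quotient q → Quotient r :=
  Quotient.lift (fun x => Quotient.mk r x) fun _ _ hab => Quotient.sound (h hab)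

private theorem qmap_mk {q r : Setoid X} (h : q ≤ r) (x : X) :
    qmap h (Quotient.mk q x) = Quotient.mk r x := rfl

private theorem qmap_surj {q r : Setoid X} (h : q ≤ r) : Function.Surjective (qmap h) :=
  fun c => Quotient.inductionOn c fun x => ⟨Quotient.mk q x, rfl⟩

private theorem nc_le_of_le [Finite X] {q r : Setoid X} (h : q ≤ r) : nc r ≤ nc q :=
  Nat.card_le_card_of_surjective (qmap h) (qmap_surj h)

private theorem eq_of_le_of_nc_le [Finite X] {q r : Setoid X} (h : q ≤ r)
    (hc : nc q ≤ nc r) : q = r := by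
  have hbij : Function.Bijective (qmap h) :=
    (Nat.bijective_iff_surjective_and_card (qmap h)).2
      ⟨qmap_surj h, le_antisymm hc (nc_le_of_le h)⟩
  refine le_antisymm h fun x y hxy => ?_
  have : qmap h (Quotient.mk q x) = qmap h (Quotient.mk q y) := by
    rw [qmap_mk, qmap_mk]
    exact Quotient.sound hxy
  exact Quotient.exact (hbij.injective this)

private theorem card_ne_add_one {α : Type*} [Finite α] (a : α) :
    Nat.card {b : α // b ≠ a} + 1 = Nat.card α := by
  rw [← Finite.card_option]
  exact Nat.card_congr (Equiv.optionSubtypeNe a)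

/-- The setoid obtained from `s` by gluing the classes of `x` and `y`. -/
private def glue2 (s : Setoid X) (x y : X) : Setoid X where
  r u v := s u v ∨ (s u x ∧ s y v) ∨ (s u y ∧ s x v)
  iseqv := by
    refine ⟨fun u => Or.inl (s.refl' u), ?_, ?_⟩
    · rintro u v (h | ⟨h1, h2⟩ | ⟨h1, h2⟩)
      · exact Or.inl (s.symm' h)
      · exact Or.inr (Or.inr ⟨s.symm' h2, s.symm' h1⟩)
      · exact Or.inr (Or.inl ⟨s.symm' h2, s.symm' h1⟩)
    · rintro u v w (h | ⟨h1, h2⟩ | ⟨h1, h2⟩) (h' | ⟨h1', h2'⟩ | ⟨h1', h2'⟩)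
      · exact Or.inl (s.trans' h h')
      · exact Or.inr (Or.inl ⟨s.trans' h h1', h2'⟩)
      · exact Or.inr (Or.inr ⟨s.trans' h h1', h2'⟩)
      · exact Or.inr (Or.inl ⟨h1, s.trans' h2 h'⟩)
      · exact Or.inl (s.trans' h1 (s.trans' (s.symm' (s.trans' h2 h1')) h2'))
      · exact Or.inl (s.trans' h1 h2')
      · exact Or.inr (Or.inr ⟨h1, s.trans' h2 h'⟩)
      · exact Or.inl (s.trans' h1 h2')
      · exact Or.inl (s.trans' h1 (s.trans' (s.symm' (s.trans' h2 h1')) h2'))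

private theorem le_glue2 {s : Setoid X} {x y : X} : s ≤ glue2 s x y :=
  fun _ _ h => Or.inl h

private theorem glue2_rel (s : Setoid X) (x y : X) : glue2 s x y x y :=
  Or.inr (Or.inl ⟨s.refl' x, s.refl' y⟩)

private theorem glue2_le {s t : Setoid X} {x y : X} (hst : s ≤ t) (hxy : t x y) :
    glue2 s x y ≤ t := by
  rintro u v (h | ⟨h1, h2⟩ | ⟨h1, h2⟩)
  · exact hst h
  · exact t.trans' (hst h1) (t.trans' hxy (hst h2))
  · exact t.trans' (hst h1) (t.trans' (t.symm' hxy) (hst h2))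

private theorem glue2_mono {s s' : Setoid X} {x y : X} (h : s ≤ s') :
    glue2 s x y ≤ glue2 s' x y :=
  glue2_le (le_trans h le_glue2) (glue2_rel s' x y)

private theorem nc_le_glue2 [Finite X] (s : Setoid X) (x y : X) :
    nc s ≤ nc (glue2 s x y) + 1 := by
  have hinj : Function.Injective
      (fun c : {c : Quotient s // c ≠ Quotient.mk s y} => qmap (le_glue2 (x := x) (y := y)) c.1) := by
    rintro ⟨c, hc⟩ ⟨c', hc'⟩ h
    induction c using Quotient.inductionOn with
    | h u =>
    induction c' using Quotient.inductionOn with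
    | h v =>
    simp only [Subtype.mk.injEq]
    rcases Quotient.exact (h : qmap _ (Quotient.mk s u) = qmap _ (Quotient.mk s v)) with
      hrel | ⟨h1, h2⟩ | ⟨h1, h2⟩
    · exact Quotient.sound hrel
    · exact absurd (Quotient.sound (s.symm' h2)) hc'
    · exact absurd (Quotient.sound h1) hc
  have h1 := Nat.card_le_card_of_injective _ hinj
  have h2 := card_ne_add_one (Quotient.mk s y)
  unfold nc at *
  omega

/-- Splitting the class of `x` in `r` according to `q`-equivalence with `x`. -/
private def splitS (r q : Setoid X) (x : X) : Setoid X where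
  r u v := r u v ∧ (q x u ↔ q x v)
  iseqv := ⟨fun u => ⟨r.refl' u, Iff.rfl⟩,
    fun h => ⟨r.symm' h.1, h.2.symm⟩,
    fun h h' => ⟨r.trans' h.1 h'.1, h.2.trans h'.2⟩⟩

private theorem nc_splitS [Finite X] {q r : Setoid X} (h : q ≤ r) {x y : X}
    (hrxy : r x y) (hqxy : ¬ q x y) : nc (splitS r q x) = nc r + 1 := by
  classical
  have hkey : ∀ u v : X, splitS r q x u v →
      ((if r x u ∧ ¬ q x u then (none : Option (Quotient r)) else some (Quotient.mk r u)) =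
       if r x v ∧ ¬ q x v then none else some (Quotient.mk r v)) := by
    rintro u v ⟨hruv, hq⟩
    have hrx : r x u ↔ r x v :=
      ⟨fun h' => r.trans' h' hruv, fun h' => r.trans' h' (r.symm' hruv)⟩
    by_cases hc : r x u ∧ ¬ q x u
    · rw [if_pos hc, if_pos ⟨hrx.mp hc.1, fun hh => hc.2 (hq.mpr hh)⟩]
    · rw [if_neg hc, if_neg (fun hc' => hc ⟨hrx.mpr hc'.1, fun hh => hc'.2 (hq.mp hh)⟩)]
      exact congrArg some (Quotient.sound hruv)
  have hkey2 : ∀ u v : X, r u v →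
      ((if r x u then Quotient.mk (splitS r q x) x else Quotient.mk (splitS r q x) u) =
       if r x v then Quotient.mk (splitS r q x) x else Quotient.mk (splitS r q x) v) := by
    intro u v hruv
    by_cases hc : r x u
    · rw [if_pos hc, if_pos (r.trans' hc hruv)]
    · have hcv : ¬ r x v := fun h' => hc (r.trans' h' (r.symm' hruv))
      rw [if_neg hc, if_neg hcv]
      exact Quotient.sound ⟨hruv, iff_of_false (fun hh => hc (h hh)) (fun hh => hcv (h hh))⟩
  let e : Quotient (splitS r q x) ≃ Option (Quotient r) :=
    { toFun := Quotient.lift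
        (fun u => if r x u ∧ ¬ q x u then (none : Option (Quotient r)) else some (Quotient.mk r u))
        hkey
      invFun := fun o => Option.elim o (Quotient.mk (splitS r q x) y)
        (Quotient.lift
          (fun u => if r x u then Quotient.mk (splitS r q x) x else Quotient.mk (splitS r q x) u)
          hkey2)
      left_inv := by
        intro c
        induction c using Quotient.inductionOn with
        | h u =>
        show Option.elim (if r x u ∧ ¬ q x u then (none : Option (Quotient r))
          else some (Quotient.mk r u)) _ _ = _
        by_cases hc : r x u ∧ ¬ q x u
        · rw [if_pos hc]
          exact Quotient.sound ⟨r.trans' (r.symm' hrxy) hc.1, iff_of_false hqxy hc.2⟩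
        · rw [if_neg hc]
          show (if r x u then Quotient.mk (splitS r q x) x else Quotient.mk (splitS r q x) u) = _
          by_cases hxu : r x u
          · have hq : q x u := by by_contra hq; exact hc ⟨hxu, hq⟩
            rw [if_pos hxu]
            exact Quotient.sound ⟨hxu, iff_of_true (q.refl' x) hq⟩
          · rw [if_neg hxu]
      right_inv := by
        rintro (_ | c)
        · show (if r x y ∧ ¬ q x y then (none : Option (Quotient r))
            else some (Quotient.mk r y)) = none
          rw [if_pos ⟨hrxy, hqxy⟩]
        · induction c using Quotient.inductionOn with
          | h u =>
          show Quotient.lift _ hkey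
            (if r x u then Quotient.mk (splitS r q x) x else Quotient.mk (splitS r q x) u) =
            some (Quotient.mk r u)
          by_cases hxu : r x u
          · rw [if_pos hxu]
            show (if r x x ∧ ¬ q x x then (none : Option (Quotient r))
              else some (Quotient.mk r x)) = some (Quotient.mk r u)
            rw [if_neg (fun hh => hh.2 (q.refl' x))]
            exact congrArg some (Quotient.sound hxu)
          · rw [if_neg hxu]
            show (if r x u ∧ ¬ q x u then (none : Option (Quotient r))
              else some (Quotient.mk r u)) = some (Quotient.mk r u)
            rw [if_neg (fun hh => hxu hh.1)] }
  show Nat.card (Quotient (splitS r q x)) = Nat.card (Quotient r) + 1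
  rw [Nat.card_congr e, Finite.card_option]

private theorem exists_rel_not_rel {q r : Setoid X} (h : q ≤ r) (hne : q ≠ r) :
    ∃ x y, r x y ∧ ¬ q x y := by
  by_contra hc
  push_neg at hc
  exact hne (le_antisymm h fun x y hxy => hc x y hxy)

private theorem exists_split [Finite X] {q r : Setoid X} (h : q ≤ r) (hne : q ≠ r) :
    ∃ m : Setoid X, q ≤ m ∧ m ≤ r ∧ nc m = nc r + 1 := by
  obtain ⟨x, y, hrxy, hqxy⟩ := exists_rel_not_rel h hne
  refine ⟨splitS r q x, ?_, fun u v huv => huv.1, nc_splitS h hrxy hqxy⟩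
  intro u v huv
  exact ⟨h huv, ⟨fun hxu => q.trans' hxu huv, fun hxv => q.trans' hxv (q.symm' huv)⟩⟩

private theorem glue_step [Finite X] (b : Setoid X) {m r : Setoid X} (h : m ≤ r)
    (hc : nc m = nc r + 1) : nc (m ⊔ b) ≤ nc (r ⊔ b) + 1 := by
  have hne : m ≠ r := fun e => by rw [e] at hc; omega
  obtain ⟨x, y, hrxy, hmxy⟩ := exists_rel_not_rel h hne
  have hxy_ne : (Quotient.mk m x) ≠ Quotient.mk m y := fun e => hmxy (Quotient.exact e)
  -- the restricted quotient map is bijective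
  set g : {c : Quotient m // c ≠ Quotient.mk m y} → Quotient r := fun c => qmap h c.1 with hg
  have hgsurj : Function.Surjective g := by
    intro c
    induction c using Quotient.inductionOn with
    | h u =>
    by_cases hyu : r y u
    · exact ⟨⟨Quotient.mk m x, hxy_ne⟩, Quotient.sound (r.trans' hrxy hyu)⟩
    · refine ⟨⟨Quotient.mk m u, fun e => hyu (r.symm' (h (Quotient.exact e)))⟩, rfl⟩
  have hgcard : Nat.card {c : Quotient m // c ≠ Quotient.mk m y} = Nat.card (Quotient r) := by
    have := card_ne_add_one (Quotient.mk m y)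
    have hc' : Nat.card (Quotient m) = Nat.card (Quotient r) + 1 := hc
    omega
  have hginj : Function.Injective g :=
    ((Nat.bijective_iff_surjective_and_card g).2 ⟨hgsurj, hgcard⟩).injective
  -- r is exactly m with the classes of x and y glued
  have hr_le : r ≤ glue2 m x y := by
    intro u v huv
    by_cases hmuv : m u v
    · exact Or.inl hmuv
    have hne' : (Quotient.mk m u) ≠ Quotient.mk m v := fun e => hmuv (Quotient.exact e)
    by_cases hu : (Quotient.mk m u) = Quotient.mk m y
    · have hvy : (Quotient.mk m v) ≠ Quotient.mk m y := fun e => hne' (hu.trans e.symm)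
      have : g ⟨Quotient.mk m v, hvy⟩ = g ⟨Quotient.mk m x, hxy_ne⟩ := by
        show Quotient.mk r v = Quotient.mk r x
        refine Quotient.sound (r.trans' (r.symm' huv) (r.trans' (h (Quotient.exact hu)) (r.symm' hrxy)))
      have hvx : (Quotient.mk m v) = Quotient.mk m x := congrArg Subtype.val (hginj this)
      exact Or.inr (Or.inr ⟨Quotient.exact hu, m.symm' (Quotient.exact hvx)⟩)
    · by_cases hv : (Quotient.mk m v) = Quotient.mk m y
      · have : g ⟨Quotient.mk m u, hu⟩ = g ⟨Quotient.mk m x, hxy_ne⟩ := by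
          show Quotient.mk r u = Quotient.mk r x
          exact Quotient.sound (r.trans' huv (r.trans' (h (Quotient.exact hv)) (r.symm' hrxy)))
        have hux : (Quotient.mk m u) = Quotient.mk m x := congrArg Subtype.val (hginj this)
        exact Or.inr (Or.inl ⟨Quotient.exact hux, m.symm' (Quotient.exact hv)⟩)
      · exact absurd (congrArg Subtype.val (hginj (show g ⟨Quotient.mk m u, hu⟩ = g ⟨Quotient.mk m v, hv⟩ from Quotient.sound huv))) hne'
  have hreq : r = glue2 m x y := le_antisymm hr_le (glue2_le h hrxy)
  have hsup : r ⊔ b = glue2 (m ⊔ b) x y := by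
    apply le_antisymm
    · refine sup_le ?_ (le_trans le_sup_right le_glue2)
      rw [hreq]
      exact glue2_mono le_sup_left
    · refine glue2_le (sup_le_sup_right h b) ?_
      exact (le_sup_left : r ≤ r ⊔ b) hrxy
  rw [hsup]
  exact nc_le_glue2 (m ⊔ b) x y

private theorem nc_sub_mono_aux [Finite X] (b : Setoid X) :
    ∀ n : ℕ, ∀ {q r : Setoid X}, q ≤ r → nc q ≤ nc r + n →
      (nc r : ℤ) - nc (r ⊔ b) ≤ (nc q : ℤ) - nc (q ⊔ b) := by
  intro n
  induction n with
  | zero =>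
    intro q r h hcard
    rw [eq_of_le_of_nc_le h (by omega)]
  | succ n ih =>
    intro q r h hcard
    by_cases hqr : q = r
    · rw [hqr]
    obtain ⟨m, h1, h2, h3⟩ := exists_split h hqr
    have hstep := glue_step b h2 h3
    have hmono : nc (r ⊔ b) ≤ nc (m ⊔ b) := nc_le_of_le (sup_le_sup_right h2 b)
    have hm := ih h1 (by have := nc_le_of_le h1; omega)
    omega

private theorem nc_sub_mono [Finite X] (b : Setoid X) {q r : Setoid X} (h : q ≤ r) :
    (nc r : ℤ) - nc (r ⊔ b) ≤ (nc q : ℤ) - nc (q ⊔ b) :=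
  nc_sub_mono_aux b (nc q) h (by omega)

private theorem sp_of_finer_aux [Finite X] (b : Setoid X) :
    ∀ n : ℕ, ∀ {p p' : Setoid X}, nc p' ≤ nc p + n → finerComp b p' p → p' ∈ Sp b p := by
  intro n
  induction n with
  | zero =>
    intro p p' hcard hf
    have : p' = p := eq_of_le_of_nc_le hf.1 (by omega)
    rw [this]
    exact Relation.ReflTransGen.refl
  | succ n ih =>
    intro p p' hcard hf
    obtain ⟨hle, hinv⟩ := hf
    by_cases hpp : p' = p
    · rw [hpp]; exact Relation.ReflTransGen.refl
    obtain ⟨m, h1, h2, h3⟩ := exists_split hle hpp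
    have hi1 := nc_sub_mono b h1
    have hi2 := nc_sub_mono b h2
    have hmb : nc (m ⊔ b) = nc (p ⊔ b) + 1 := by omega
    have hstep : m ∈ Delta b p := ⟨h2, h3, hmb⟩
    have hm := nc_le_of_le h1
    have hrec : p' ∈ Sp b m := ih (by omega) ⟨h1, by omega⟩
    exact Relation.ReflTransGen.head hstep hrec

private theorem finer_of_sp [Finite X] (b p p' : Setoid X) (h : p' ∈ Sp b p) :
    finerComp b p' p := by
  have h' : Relation.ReflTransGen (fun u v => v ∈ Delta b u) p p' := h
  clear h
  induction h' with
  | refl => exact ⟨le_refl _, rfl⟩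
  | tail hsteps hstep ih =>
    obtain ⟨h1, h2, h3⟩ := hstep
    obtain ⟨ihle, iheq⟩ := ih
    exact ⟨le_trans h1 ihle, by omega⟩

end Statement3Aux

/-- `p' ⊣_b p` iff `p'` is an admissible gluing of `p`, and
`p' ⊐_b p` iff `p'` is an admissible split of `p`. -/
theorem statement3 {X : Type*} [Finite X] (b p p' : Setoid X) :
    (coarserComp b p' p ↔ p' ∈ Gl b p) ∧
    (finerComp b p' p ↔ p' ∈ Sp b p) := by
  refine ⟨Iff.rfl, ?_, ?_⟩
  · intro hf
    exact sp_of_finer_aux b (nc p') (by omega) hf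
  · exact finer_of_sp b p p'

end PartitionPaper
end
end

section
/- Let X be a finite set and b a partition of X. If p, p', p'' are partitions of X such that p' ⊣_b p'' and p'' ⊐_b p, then p'' = p∧p', the coarsest partition of X that is finer than both p and p'. -/
open Sum
open scoped Classical

noncomputable section

namespace PartitionPaper

variable {X : Type*}

/-!
The defect `nc q - nc (q ⊔ b)` is antitone in `q`: gluing two blocks of `q` lowers `nc q` by one
and `nc (q ⊔ b)` by at most one. So `p ⊓ p' ≤ p` has defect at least that of `p`, which is that of
`p''`; and `(p ⊓ p') ⊔ b ≤ p' ⊔ b` has at least as many blocks as `p' ⊔ b`, that is, as `p'' ⊔ b`.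
Together these give `nc p'' ≤ nc (p ⊓ p')`, so the refinement `p'' ≤ p ⊓ p'` is an equality.
-/

section Refinement

variable {s t : Setoid X}

lemma map_of_le_surjective (h : s ≤ t) : Function.Surjective (Setoid.map_of_le h) :=
  Quotient.ind fun a => ⟨Quotient.mk s a, rfl⟩

variable [Finite X]

lemma nc_le_nc_of_le (h : s ≤ t) : nc t ≤ nc s :=
  Nat.card_le_card_of_surjective _ (map_of_le_surjective h)

lemma eq_of_le_of_nc_le_s6 (h : s ≤ t) (hnc : nc s ≤ nc t) : s = t := by
  have hinj : Function.Injective (Setoid.map_of_le h) :=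
    ((Nat.bijective_iff_surjective_and_card _).2
      ⟨map_of_le_surjective h, le_antisymm hnc (nc_le_nc_of_le h)⟩).1
  exact le_antisymm h fun a b hab => Quotient.exact (hinj (Quotient.sound hab))

end Refinement

section Glue

def glue (s : Setoid X) (x y : X) : Setoid X where
  r z w := s z w ∨ (s z x ∧ s y w) ∨ (s z y ∧ s x w)
  iseqv := by
    constructor
    · intro z; exact Or.inl (s.refl z)
    · rintro a b (h | ⟨h1, h2⟩ | ⟨h1, h2⟩)
      · exact Or.inl (s.symm h)
      · exact Or.inr (Or.inr ⟨s.symm h2, s.symm h1⟩)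
      · exact Or.inr (Or.inl ⟨s.symm h2, s.symm h1⟩)
    · rintro a b c (h | ⟨h1, h2⟩ | ⟨h1, h2⟩) (g | ⟨g1, g2⟩ | ⟨g1, g2⟩)
      · exact Or.inl (s.trans h g)
      · exact Or.inr (Or.inl ⟨s.trans h g1, g2⟩)
      · exact Or.inr (Or.inr ⟨s.trans h g1, g2⟩)
      · exact Or.inr (Or.inl ⟨h1, s.trans h2 g⟩)
      · exact Or.inl (s.trans h1 (s.trans (s.symm (s.trans h2 g1)) g2))
      · exact Or.inl (s.trans h1 g2)
      · exact Or.inr (Or.inr ⟨h1, s.trans h2 g⟩)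
      · exact Or.inl (s.trans h1 g2)
      · exact Or.inl (s.trans h1 (s.trans (s.symm (s.trans h2 g1)) g2))

variable {s t : Setoid X} {x y : X}

lemma le_glue : s ≤ glue s x y := fun _ _ h => Or.inl h

lemma glue_rel : glue s x y x y := Or.inr (Or.inl ⟨s.refl x, s.refl y⟩)

lemma glue_le (hst : s ≤ t) (hxy : t x y) : glue s x y ≤ t := by
  rintro a b (h | ⟨h1, h2⟩ | ⟨h1, h2⟩)
  · exact hst h
  · exact t.trans (t.trans (hst h1) hxy) (hst h2)
  · exact t.trans (t.trans (hst h1) (t.symm hxy)) (hst h2)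

lemma glue_sup (b : Setoid X) : glue s x y ⊔ b = glue (s ⊔ b) x y :=
  le_antisymm
    (sup_le (glue_le (le_sup_left.trans le_glue) glue_rel) (le_sup_right.trans le_glue))
    (glue_le (sup_le_sup_right le_glue b) (le_sup_left (a := glue s x y) glue_rel))

/-- Only the block of `y` can be merged away, so the quotient map is injective off it. -/
lemma nc_le_nc_glue_add_one [Finite X] : nc s ≤ nc (glue s x y) + 1 := by
  let f : Quotient s → Option (Quotient (glue s x y)) := fun c =>
    if c = Quotient.mk s y then none else some (Setoid.map_of_le le_glue c)
  have hf : Function.Injective f := by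
    intro c d hcd
    by_cases hc : c = Quotient.mk s y <;> by_cases hd : d = Quotient.mk s y
    · rw [hc, hd]
    · simp [f, hc, hd] at hcd
    · simp [f, hc, hd] at hcd
    · simp only [f, if_neg hc, if_neg hd, Option.some.injEq] at hcd
      induction c using Quotient.ind with | _ u =>
      induction d using Quotient.ind with | _ v =>
      rcases Quotient.exact hcd with h | ⟨h1, h2⟩ | ⟨h1, h2⟩
      · exact Quotient.sound h
      · exact absurd (Quotient.sound (s.symm h2)) hd
      · exact absurd (Quotient.sound h1) hc
  simpa [nc] using Nat.card_le_card_of_injective f hf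

end Glue

theorem nc_sub_nc_sup_le_of_le [Finite X] (b : Setoid X) {q p : Setoid X} (hqp : q ≤ p) :
    (nc p : ℤ) - nc (p ⊔ b) ≤ nc q - nc (q ⊔ b) := by
  induction hn : nc q using Nat.strong_induction_on generalizing q with
  | _ n ih =>
  by_cases hpq : p ≤ q
  · rw [← hn, le_antisymm hqp hpq]
  obtain ⟨x, y, hp, hq⟩ : ∃ x y, p x y ∧ ¬ q x y := by simpa [Setoid.le_def] using hpq
  have hlt : nc (glue q x y) < nc q := lt_of_le_of_ne (nc_le_nc_of_le le_glue) fun h =>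
    hq (by rw [eq_of_le_of_nc_le_s6 le_glue h.ge]; exact glue_rel)
  have hsup : nc (q ⊔ b) ≤ nc (glue q x y ⊔ b) + 1 :=
    glue_sup (s := q) b ▸ nc_le_nc_glue_add_one
  have := ih _ (hn ▸ hlt) (glue_le hqp hp) rfl
  omega

/-- If `p' ⊣_b p''` and `p'' ⊐_b p`, then `p'' = p ⊓ p'`, the coarsest
partition finer than both `p` and `p'`. -/
theorem statement6 {X : Type*} [Finite X] (b p p' p'' : Setoid X)
    (h1 : coarserComp b p' p'') (h2 : finerComp b p'' p) :
    p'' = p ⊓ p' := by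
  obtain ⟨hp''p', hsup⟩ := h1
  obtain ⟨hp''p, hdefect⟩ := h2
  have hle : p'' ≤ p ⊓ p' := le_inf hp''p hp''p'
  have hsup_le := nc_le_nc_of_le (sup_le_sup_right (inf_le_right : p ⊓ p' ≤ p') b)
  have hdefect_le := nc_sub_nc_sup_le_of_le b (inf_le_left : p ⊓ p' ≤ p)
  exact eq_of_le_of_nc_le_s6 hle (by omega)

end PartitionPaper
end
end
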